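/- arXiv:1609.05810 — 2 statements merged into one kernel-verified Lean document; each statement's English description precedes it below -/
import Mathlib

section
/- Let 0 < λ ≤ Λ and let 1 ≤ p ≤ n be an integer. For every p-dimensional linear subspace W of ℝⁿ and every n×n real symmetric matrix X, P⁺_{λ,Λ|W}(X) ≤ Σ_{i=n−p+1}^n (Λ·e_i(X)⁺ − λ·e_i(X)⁻), where e_1(X) ≤ … ≤ e_n(X) are the eigenvalues of X in increasing order, t⁺ = max(t,0) and t⁻ = max(−t,0). -/
open MeasureTheory Metric Filter
open scoped ENNReal

noncomputable section

/-- Matrix (in the standard basis) of the orthogonal projection of `ℝⁿ` onto a subspace `W`. -/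
noncomputable def projMatrix {n : ℕ} (W : Submodule ℝ (EuclideanSpace ℝ (Fin n))) :
    Matrix (Fin n) (Fin n) ℝ :=
  LinearMap.toMatrix (EuclideanSpace.basisFun (Fin n) ℝ).toBasis
    (EuclideanSpace.basisFun (Fin n) ℝ).toBasis
    (W.subtype ∘ₗ (W.orthogonalProjectionOnto).toLinearMap)

/-- `X_W = P_W X P_W`, the compression of `X` to the subspace `W`. -/
noncomputable def restrictW {n : ℕ} (W : Submodule ℝ (EuclideanSpace ℝ (Fin n)))
    (X : Matrix (Fin n) (Fin n) ℝ) : Matrix (Fin n) (Fin n) ℝ :=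
  projMatrix W * X * projMatrix W

/-- `Tr(A⁺)`, i.e. the sum of the positive parts of the eigenvalues of a symmetric matrix `A`,
where `A = A⁺ - A⁻` is the unique decomposition with `A⁺, A⁻` positive semidefinite and
`A⁺ A⁻ = 0`. -/
noncomputable def posTrace {n : ℕ} (A : Matrix (Fin n) (Fin n) ℝ) : ℝ :=
  if h : A.IsHermitian then ∑ i, max (h.eigenvalues i) 0 else 0

/-- `Tr(A⁻)`, the sum of the negative parts of the eigenvalues of a symmetric matrix `A`. -/
noncomputable def negTrace {n : ℕ} (A : Matrix (Fin n) (Fin n) ℝ) : ℝ :=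
  if h : A.IsHermitian then ∑ i, max (-h.eigenvalues i) 0 else 0

/-- The restricted Pucci maximal operator `P⁺_{λ,Λ|W}(X) = Λ·Tr(X_W⁺) − λ·Tr(X_W⁻)`. -/
noncomputable def pucciSupW {n : ℕ} (lam Lam : ℝ) (W : Submodule ℝ (EuclideanSpace ℝ (Fin n)))
    (X : Matrix (Fin n) (Fin n) ℝ) : ℝ :=
  Lam * posTrace (restrictW W X) - lam * negTrace (restrictW W X)

/-- The restricted Pucci minimal operator `P⁻_{λ,Λ|W}(X) = λ·Tr(X_W⁺) − Λ·Tr(X_W⁻)`. -/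
noncomputable def pucciInfW {n : ℕ} (lam Lam : ℝ) (W : Submodule ℝ (EuclideanSpace ℝ (Fin n)))
    (X : Matrix (Fin n) (Fin n) ℝ) : ℝ :=
  lam * posTrace (restrictW W X) - Lam * negTrace (restrictW W X)

/-- The eigenvalues of a symmetric matrix arranged in increasing order, `0`-based:
`sortedEig X 0 = e_1(X) ≤ … ≤ sortedEig X (n-1) = e_n(X)`. -/
noncomputable def sortedEig {n : ℕ} (X : Matrix (Fin n) (Fin n) ℝ) : Fin n → ℝ :=
  if h : X.IsHermitian then h.eigenvalues ∘ (Tuple.sort h.eigenvalues) else 0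

/-- The degenerate Pucci maximal operator of order `p`:
`P⁺_{λ,Λ|p}(X) = Σ_{i=n−p+1}^n (Λ·e_i(X)⁺ − λ·e_i(X)⁻)` (sum over the `p` largest
eigenvalues). -/
noncomputable def pucciSupP {n : ℕ} (lam Lam : ℝ) (p : ℕ)
    (X : Matrix (Fin n) (Fin n) ℝ) : ℝ :=
  ∑ i ∈ Finset.univ.filter (fun i : Fin n => n - p ≤ (i : ℕ)),
    (Lam * max (sortedEig X i) 0 - lam * max (-(sortedEig X i)) 0)

/-- The degenerate Pucci minimal operator of order `p`:
`P⁻_{λ,Λ|p}(X) = Σ_{i=1}^p (λ·e_i(X)⁺ − Λ·e_i(X)⁻)` (sum over the `p` smallest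
eigenvalues). -/
noncomputable def pucciInfP {n : ℕ} (lam Lam : ℝ) (p : ℕ)
    (X : Matrix (Fin n) (Fin n) ℝ) : ℝ :=
  ∑ i ∈ Finset.univ.filter (fun i : Fin n => (i : ℕ) < p),
    (lam * max (sortedEig X i) 0 - Lam * max (-(sortedEig X i)) 0)

/-- The Hessian matrix `D²φ(x)` of a real valued function on `ℝⁿ`. -/
noncomputable def hessianMatrix {n : ℕ} (φ : EuclideanSpace ℝ (Fin n) → ℝ)
    (x : EuclideanSpace ℝ (Fin n)) : Matrix (Fin n) (Fin n) ℝ :=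
  fun i j => iteratedFDeriv ℝ 2 φ x ![EuclideanSpace.single i 1, EuclideanSpace.single j 1]

/-- `u` is a viscosity subsolution of `G(u, Du, D²u) = f(x)` in `Ω`. -/
def IsViscositySubsolution {n : ℕ} (Ω : Set (EuclideanSpace ℝ (Fin n)))
    (G : ℝ → EuclideanSpace ℝ (Fin n) → Matrix (Fin n) (Fin n) ℝ → ℝ)
    (u f : EuclideanSpace ℝ (Fin n) → ℝ) : Prop :=
  ∀ x₀ ∈ Ω, ∀ φ : EuclideanSpace ℝ (Fin n) → ℝ, ContDiff ℝ 2 φ →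
    IsLocalMaxOn (fun x => u x - φ x) Ω x₀ →
    f x₀ ≤ G (u x₀) (gradient φ x₀) (hessianMatrix φ x₀)

/-- `v` is a viscosity supersolution of `G(v, Dv, D²v) = f(x)` in `Ω`. -/
def IsViscositySupersolution {n : ℕ} (Ω : Set (EuclideanSpace ℝ (Fin n)))
    (G : ℝ → EuclideanSpace ℝ (Fin n) → Matrix (Fin n) (Fin n) ℝ → ℝ)
    (v f : EuclideanSpace ℝ (Fin n) → ℝ) : Prop :=
  ∀ x₀ ∈ Ω, ∀ φ : EuclideanSpace ℝ (Fin n) → ℝ, ContDiff ℝ 2 φ →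
    IsLocalMinOn (fun x => v x - φ x) Ω x₀ →
    G (v x₀) (gradient φ x₀) (hessianMatrix φ x₀) ≤ f x₀

-- The `α`-Riesz kernel (for sets contained in `B_d`), with value `∞` at the origin:
-- `Φ_α(x) = |x|^{−α}` for `α > 0` and `Φ_0(x) = log(2d/|x|)`.
open Classical in
noncomputable def rieszKernel {n : ℕ} (α d : ℝ) (x : EuclideanSpace ℝ (Fin n)) : ℝ≥0∞ :=
  if x = 0 then ⊤
  else ENNReal.ofReal (if α = 0 then Real.log (2 * d / ‖x‖) else ‖x‖ ^ (-α))

/-- The real valued `α`-Riesz kernel (for sets contained in `B_d`):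
`Φ_α(x) = |x|^{−α}` for `α > 0` and `Φ_0(x) = log(2d/|x|)`. -/
noncomputable def rieszKernelR {n : ℕ} (α d : ℝ) (x : EuclideanSpace ℝ (Fin n)) : ℝ :=
  if α = 0 then Real.log (2 * d / ‖x‖) else ‖x‖ ^ (-α)

/-- A set `E ⊆ ℝⁿ` has zero `α`-Riesz capacity: every Borel probability measure supported
on a compact subset of `E` has infinite `α`-energy. -/
def HasZeroRieszCapacity {n : ℕ} (α : ℝ) (E : Set (EuclideanSpace ℝ (Fin n))) : Prop :=
  ∀ K ⊆ E, IsCompact K → ∀ d > 0, K ⊆ ball (0 : EuclideanSpace ℝ (Fin n)) d →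
    ∀ μ : Measure (EuclideanSpace ℝ (Fin n)), IsProbabilityMeasure μ → μ Kᶜ = 0 →
      ∫⁻ x, ∫⁻ y, rieszKernel α d (x - y) ∂μ ∂μ = ⊤

/-!
The range of the compression `X_W` lies in `W`, so its eigenvectors for nonzero eigenvalues lie
in `W`, and on `W` its quadratic form is that of `X`. For a threshold `t`,
the span of the eigenvectors of `X_W` with eigenvalue `≥ t`, intersected with `W`, has dimension at
most `p` and, by Courant–Fischer, at most the number of eigenvalues of `X` that are `≥ t`; it loses
at most `n - p` dimensions to the intersection, and none when `t > 0`. So above every threshold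
`X_W` has no more eigenvalues than the `p` largest eigenvalues of `X` padded by `n - p` zeros, and
this majorization survives any monotone weight vanishing at `0`, such as `t ↦ Λ t⁺ - λ t⁻`.
-/

open Module Submodule Finset Matrix
open scoped RealInnerProductSpace

section Eigenbasis

variable {ι E : Type*} [Fintype ι] [NormedAddCommGroup E] [InnerProductSpace ℝ E]
  {T : E →ₗ[ℝ] E} {b : OrthonormalBasis ι ℝ E} {ev : ι → ℝ}

theorem OrthonormalBasis.inner_apply_self_eq_sum (hb : ∀ i, T (b i) = ev i • b i) (v : E) :
    ⟪T v, v⟫ = ∑ i, ev i * b.repr v i ^ 2 := by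
  have hTv : T v = ∑ i, (ev i * b.repr v i) • b i := by
    conv_lhs => rw [← b.sum_repr v]
    simp only [map_sum, map_smul, hb, smul_smul, mul_comm]
  simp only [hTv, sum_inner, inner_smul_left, ← b.repr_apply_apply, conj_trivial]
  exact sum_congr rfl fun i _ => by ring

theorem OrthonormalBasis.norm_sq_eq_sum (v : E) : ‖v‖ ^ 2 = ∑ i, b.repr v i ^ 2 := by
  rw [← b.repr.norm_map, EuclideanSpace.real_norm_sq_eq]

theorem OrthonormalBasis.repr_eq_zero_of_mem_span {s : Set ι} {v : E}
    (hv : v ∈ span ℝ (b '' s)) {i : ι} (hi : i ∉ s) : b.repr v i = 0 := by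
  rw [← b.coe_toBasis, Basis.mem_span_image] at hv
  rw [← b.coe_toBasis_repr_apply]
  by_contra h
  exact hi (hv (Finsupp.mem_support_iff.mpr h))

theorem OrthonormalBasis.finrank_span_image (s : Finset ι) :
    finrank ℝ (span ℝ (b '' s)) = #s := by
  rw [Set.image_eq_range]
  exact (finrank_span_eq_card
    (b.orthonormal.linearIndependent.comp ((↑) : s → ι) Subtype.val_injective)).trans
    (Fintype.card_coe s)

theorem OrthonormalBasis.le_inner_apply_self_of_mem_span (hb : ∀ i, T (b i) = ev i • b i)
    {s : Finset ι} {t : ℝ} (hs : ∀ i ∈ s, t ≤ ev i) {v : E} (hv : v ∈ span ℝ (b '' s)) :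
    t * ‖v‖ ^ 2 ≤ ⟪T v, v⟫ := by
  rw [b.inner_apply_self_eq_sum hb, b.norm_sq_eq_sum, mul_sum]
  refine sum_le_sum fun i _ => ?_
  by_cases hi : i ∈ s
  · exact mul_le_mul_of_nonneg_right (hs i hi) (sq_nonneg _)
  · simp [b.repr_eq_zero_of_mem_span hv (mod_cast hi)]

theorem OrthonormalBasis.inner_apply_self_lt_of_mem_span (hb : ∀ i, T (b i) = ev i • b i)
    {s : Finset ι} {t : ℝ} (hs : ∀ i ∈ s, ev i < t) {v : E} (hv : v ∈ span ℝ (b '' s))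
    (hv0 : v ≠ 0) : ⟪T v, v⟫ < t * ‖v‖ ^ 2 := by
  rw [b.inner_apply_self_eq_sum hb, b.norm_sq_eq_sum, mul_sum]
  obtain ⟨j, hj⟩ : ∃ j, b.repr v j ≠ 0 := by
    by_contra! h
    exact hv0 (b.repr.injective (by ext i; simp [h i]))
  have hjs : j ∈ s := by_contra fun h => hj (b.repr_eq_zero_of_mem_span hv (mod_cast h))
  refine sum_lt_sum (fun i _ => ?_) ⟨j, mem_univ j, ?_⟩
  · by_cases hi : i ∈ s
    · exact mul_le_mul_of_nonneg_right (hs i hi).le (sq_nonneg _)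
    · simp [b.repr_eq_zero_of_mem_span hv (mod_cast hi)]
  · exact mul_lt_mul_of_pos_right (hs j hjs) (by positivity)

/-- Courant–Fischer: such a subspace meets the span of the eigenvectors with eigenvalue `< t`
only in `0`. -/
theorem OrthonormalBasis.finrank_le_card_of_le_inner_apply_self
    (hb : ∀ i, T (b i) = ev i • b i) {t : ℝ} (S : Submodule ℝ E)
    (hS : ∀ v ∈ S, t * ‖v‖ ^ 2 ≤ ⟪T v, v⟫) : finrank ℝ S ≤ #{i | t ≤ ev i} := by
  have := b.toBasis.finiteDimensional_of_finite
  have hdisj : Disjoint S (span ℝ (b '' ↑({i | ev i < t} : Finset ι))) := by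
    refine disjoint_def.mpr fun v hvS hv => by_contra fun hv0 => ?_
    have := b.inner_apply_self_lt_of_mem_span hb (fun i hi => by simpa using hi) hv hv0
    linarith [hS v hvS]
  have hsum := finrank_add_finrank_le_of_disjoint hdisj
  rw [b.finrank_span_image, finrank_eq_card_basis b.toBasis] at hsum
  have hsplit := card_filter_add_card_filter_not (s := univ) (fun i => t ≤ ev i)
  simp only [not_le, card_univ] at hsplit
  omega

end Eigenbasis

section Counting

variable {m : ℕ} {α : Type*} [LinearOrder α]

theorem Monotone.le_apply_iff_sub_le_card {g : Fin m → α} (hg : Monotone g) (t : α) (i : Fin m) :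
    t ≤ g i ↔ m - i ≤ #{j | t ≤ g j} := by
  constructor
  · intro hi
    rw [← Fin.card_Ici]
    exact card_le_card fun j hj => mem_filter.mpr ⟨mem_univ j, hi.trans (hg (mem_Ici.mp hj))⟩
  · intro hcard
    by_contra! hi
    have hsub : ({j | t ≤ g j} : Finset (Fin m)) ⊆ Ioi i := fun j hj => mem_Ioi.mpr <|
      lt_of_not_ge fun hji => (hg hji).not_gt (hi.trans_le (mem_filter.mp hj).2)
    have := card_le_card hsub
    rw [Fin.card_Ioi] at this
    omega

theorem Fin.card_filter_le_val {k : ℕ} (hk : k ≤ m) : #{i : Fin m | k ≤ (i : ℕ)} = m - k := by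
  have hsplit := card_filter_add_card_filter_not (s := univ) (fun i : Fin m => (i : ℕ) < k)
  simp only [not_lt, card_univ, Fintype.card_fin, Fin.card_filter_val_lt] at hsplit
  omega

theorem Monotone.min_card_le_card_filter_top {e : Fin m → α} (he : Monotone e) {p : ℕ}
    (hp : p ≤ m) (t : α) : min p #{i | t ≤ e i} ≤ #{i : Fin m | m - p ≤ (i : ℕ) ∧ t ≤ e i} := by
  rcases le_total #{i | t ≤ e i} p with hc | hc
  · refine (min_le_right _ _).trans (card_le_card fun i hi => ?_)
    have hi' := (mem_filter.mp hi).2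
    have := (he.le_apply_iff_sub_le_card t i).mp hi'
    simp only [mem_filter, mem_univ, true_and]
    exact ⟨by omega, hi'⟩
  · have htop : #{i : Fin m | m - p ≤ (i : ℕ)} = p := by
      rw [Fin.card_filter_le_val (Nat.sub_le m p)]; omega
    refine (min_le_left _ _).trans (htop.ge.trans (card_le_card fun i hi => ?_))
    have hi' : m - p ≤ (i : ℕ) := (mem_filter.mp hi).2
    simp only [mem_filter, mem_univ, true_and]
    exact ⟨hi', (he.le_apply_iff_sub_le_card t i).mpr (by omega)⟩

theorem card_filter_le_comp_equiv (a : Fin m → α) (σ : Fin m ≃ Fin m) (t : α) :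
    #{j | t ≤ a (σ j)} = #{j | t ≤ a j} :=
  card_equiv σ (by simp)

/-- Sorting `a` and `b`, the hypothesis at the threshold `t = a_(i)` forces `a_(i) ≤ b_(i)`. -/
theorem sum_le_sum_of_card_filter_le {β : Type*} [AddCommMonoid β] [PartialOrder β]
    [IsOrderedAddMonoid β] {a b : Fin m → α} {f : α → β} (hf : Monotone f)
    (h : ∀ t, #{i | t ≤ a i} ≤ #{i | t ≤ b i}) : ∑ i, f (a i) ≤ ∑ i, f (b i) := by
  rw [← Equiv.sum_comp (Tuple.sort a) (fun i => f (a i)),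
    ← Equiv.sum_comp (Tuple.sort b) (fun i => f (b i))]
  refine sum_le_sum fun i _ => hf ?_
  set t := a (Tuple.sort a i)
  have ha : m - i ≤ #{j | t ≤ a (Tuple.sort a j)} :=
    ((Tuple.monotone_sort a).le_apply_iff_sub_le_card t i).mp le_rfl
  rw [card_filter_le_comp_equiv] at ha
  refine ((Tuple.monotone_sort b).le_apply_iff_sub_le_card t i).mpr ?_
  exact ha.trans ((h t).trans_eq (card_filter_le_comp_equiv b (Tuple.sort b) t).symm)

/-- Compare `a` with the `p` largest entries of `e` padded by `m - p` zeros. -/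
theorem sum_le_sum_top_of_card_filter_le [Zero α] {β : Type*} [AddCommMonoid β] [PartialOrder β]
    [IsOrderedAddMonoid β] {p : ℕ} (hp : p ≤ m) {a e : Fin m → α} (he : Monotone e)
    {f : α → β} (hf : Monotone f) (hf0 : f 0 = 0)
    (h : ∀ t, #{i | t ≤ a i} ≤ min p #{i | t ≤ e i} + if t ≤ 0 then m - p else 0) :
    ∑ i, f (a i) ≤ ∑ i ∈ univ.filter (fun i : Fin m => m - p ≤ (i : ℕ)), f (e i) := by
  set b : Fin m → α := fun i => if m - p ≤ (i : ℕ) then e i else 0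
  have hsum : ∑ i ∈ univ.filter (fun i : Fin m => m - p ≤ (i : ℕ)), f (e i) = ∑ i, f (b i) := by
    rw [sum_filter]
    exact sum_congr rfl fun i _ => by simp only [b, apply_ite f, hf0]
  rw [hsum]
  refine sum_le_sum_of_card_filter_le hf fun t => (h t).trans ?_
  have hsplit : (univ.filter fun i => t ≤ b i) =
      univ.filter (fun i : Fin m => m - p ≤ (i : ℕ) ∧ t ≤ e i) ∪
        univ.filter (fun i : Fin m => (i : ℕ) < m - p ∧ t ≤ 0) := by
    ext i
    simp only [b, mem_filter, mem_union, mem_univ, true_and]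
    split_ifs <;> grind
  rw [hsplit, card_union_of_disjoint (disjoint_filter.mpr fun i _ h₁ h₂ => by omega)]
  gcongr
  · exact he.min_card_le_card_filter_top hp t
  · split_ifs with ht
    · simp [ht, Fin.card_filter_val_lt]
    · exact Nat.zero_le _

end Counting

theorem Matrix.IsHermitian.toEuclideanLin_eigenvectorBasis {ι 𝕜 : Type*} [RCLike 𝕜] [Fintype ι]
    [DecidableEq ι] {A : Matrix ι ι 𝕜} (hA : A.IsHermitian) (i : ι) :
    toEuclideanLin A (hA.eigenvectorBasis i) = (hA.eigenvalues i : 𝕜) • hA.eigenvectorBasis i := by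
  ext j
  simpa [toLpLin_apply] using congrFun (hA.mulVec_eigenvectorBasis i) j

theorem sortedEig_eq {n : ℕ} {X : Matrix (Fin n) (Fin n) ℝ} (hX : X.IsHermitian) :
    sortedEig X = hX.eigenvalues ∘ Tuple.sort hX.eigenvalues :=
  dif_pos hX

theorem monotone_sortedEig {n : ℕ} {X : Matrix (Fin n) (Fin n) ℝ} (hX : X.IsHermitian) :
    Monotone (sortedEig X) :=
  sortedEig_eq hX ▸ Tuple.monotone_sort _

theorem monotone_mul_max_sub_mul_max {lam Lam : ℝ} (hlam : 0 ≤ lam) (hLam : 0 ≤ Lam) :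
    Monotone fun t : ℝ => Lam * max t 0 - lam * max (-t) 0 :=
  fun _ _ hst => sub_le_sub (by gcongr) (by gcongr)

section Compression

variable {n : ℕ} (W : Submodule ℝ (EuclideanSpace ℝ (Fin n))) {X : Matrix (Fin n) (Fin n) ℝ}

theorem toEuclideanLin_projMatrix :
    toEuclideanLin (projMatrix W) = (W.starProjection : EuclideanSpace ℝ (Fin n) →ₗ[ℝ] _) := by
  rw [toEuclideanLin_eq_toLin_orthonormal, projMatrix, toLin_toMatrix]
  rfl

theorem projMatrix_isHermitian : (projMatrix W).IsHermitian := by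
  rw [← isSymmetric_toEuclideanLin_iff, toEuclideanLin_projMatrix]
  exact W.starProjection_isSymmetric

theorem restrictW_isHermitian (hX : X.IsHermitian) : (restrictW W X).IsHermitian := by
  have h := isHermitian_conjTranspose_mul_mul (projMatrix W) hX
  rwa [(projMatrix_isHermitian W).eq] at h

theorem toEuclideanLin_restrictW (v : EuclideanSpace ℝ (Fin n)) :
    toEuclideanLin (restrictW W X) v = W.starProjection (toEuclideanLin X (W.starProjection v)) := by
  simp [restrictW, Matrix.mul_assoc, toEuclideanLin_projMatrix]

theorem toEuclideanLin_restrictW_mem (v : EuclideanSpace ℝ (Fin n)) :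
    toEuclideanLin (restrictW W X) v ∈ W := by
  rw [toEuclideanLin_restrictW]
  exact W.starProjection_apply_mem _

theorem inner_toEuclideanLin_restrictW_of_mem {v : EuclideanSpace ℝ (Fin n)} (hv : v ∈ W) :
    ⟪toEuclideanLin (restrictW W X) v, v⟫ = ⟪toEuclideanLin X v, v⟫ := by
  rw [toEuclideanLin_restrictW, W.inner_starProjection_left_eq_right,
    W.starProjection_eq_self_iff.mpr hv]

/-- Cauchy interlacing for the compression, in counting form. -/
theorem card_eigenvalues_restrictW_ge_le {p : ℕ} (hW : finrank ℝ W = p) (hX : X.IsHermitian)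
    (hA : (restrictW W X).IsHermitian) (t : ℝ) :
    #{i | t ≤ hA.eigenvalues i} ≤
      min p #{i | t ≤ sortedEig X i} + if t ≤ 0 then n - p else 0 := by
  set bA := hA.eigenvectorBasis
  have hbA (i : Fin n) : toEuclideanLin (restrictW W X) (bA i) = hA.eigenvalues i • bA i := by
    simpa using hA.toEuclideanLin_eigenvectorBasis i
  set bX := hX.eigenvectorBasis.reindex (Tuple.sort hX.eigenvalues).symm
  have hbX (i : Fin n) : toEuclideanLin X (bX i) = sortedEig X i • bX i := by
    simpa [bX, sortedEig_eq hX] using hX.toEuclideanLin_eigenvectorBasis (Tuple.sort _ i)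
  set V := span ℝ (bA '' ↑({i | t ≤ hA.eigenvalues i} : Finset (Fin n)))
  have hV : finrank ℝ V = #{i | t ≤ hA.eigenvalues i} := bA.finrank_span_image _
  have hVW : finrank ℝ ↥(V ⊓ W) ≤ min p #{i | t ≤ sortedEig X i} := by
    refine le_min (hW ▸ finrank_mono inf_le_right) (bX.finrank_le_card_of_le_inner_apply_self hbX
      _ fun v hv => ?_)
    rw [← inner_toEuclideanLin_restrictW_of_mem W hv.2]
    exact bA.le_inner_apply_self_of_mem_span hbA (fun i hi => by simpa using hi) hv.1
  split_ifs with ht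
  · have hsup := finrank_sup_add_finrank_inf_eq V W
    have hle : finrank ℝ ↥(V ⊔ W) ≤ n := (finrank_le _).trans_eq finrank_euclideanSpace_fin
    omega
  · have hVle : V ≤ W := span_le.mpr <| by
      rintro _ ⟨i, hi, rfl⟩
      have hμ : hA.eigenvalues i ≠ 0 := ((not_le.mp ht).trans_le (by simpa using hi)).ne'
      rw [← inv_smul_smul₀ hμ (bA i), ← hbA]
      exact W.smul_mem _ (toEuclideanLin_restrictW_mem W _)
    rw [inf_eq_left.mpr hVle, hV] at hVW
    omega

end Compression

theorem pucci_restricted_le_pucci_order_general (n : ℕ) (lam Lam : ℝ)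
    (hlam : 0 < lam) (hLam : lam ≤ Lam) (p : ℕ)
    (W : Submodule ℝ (EuclideanSpace ℝ (Fin n))) (hW : Module.finrank ℝ W = p)
    (X : Matrix (Fin n) (Fin n) ℝ) (hX : X.IsHermitian) :
    pucciSupW lam Lam W X ≤ pucciSupP lam Lam p X := by
  have hA := restrictW_isHermitian W hX
  have hp : p ≤ n := hW ▸ (finrank_le W).trans_eq finrank_euclideanSpace_fin
  have hLHS : pucciSupW lam Lam W X =
      ∑ i, (Lam * max (hA.eigenvalues i) 0 - lam * max (-hA.eigenvalues i) 0) := by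
    rw [pucciSupW, posTrace, negTrace, dif_pos hA, dif_pos hA, mul_sum, mul_sum, sum_sub_distrib]
  rw [hLHS, pucciSupP]
  exact sum_le_sum_top_of_card_filter_le hp (monotone_sortedEig hX)
    (monotone_mul_max_sub_mul_max hlam.le (hlam.trans_le hLam).le) (by simp)
    (card_eigenvalues_restrictW_ge_le W hW hX hA)

/-- the restricted Pucci maximal operator on a `p`-dimensional subspace is
bounded by the weighted sum of the `p` largest eigenvalues. -/
theorem pucci_restricted_le_pucci_order (n : ℕ) (lam Lam : ℝ)
    (hlam : 0 < lam) (hLam : lam ≤ Lam) (p : ℕ) (hp1 : 1 ≤ p) (hpn : p ≤ n)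
    (W : Submodule ℝ (EuclideanSpace ℝ (Fin n))) (hW : Module.finrank ℝ W = p)
    (X : Matrix (Fin n) (Fin n) ℝ) (hX : X.IsHermitian) :
    pucciSupW lam Lam W X ≤ pucciSupP lam Lam p X :=
  pucci_restricted_le_pucci_order_general n lam Lam hlam hLam p W hW X hX
end
end

section
/- (Failure of the Maximum Principle when bδ > λp.) Let n ≥ 2, 0 < λ ≤ Λ, and let 1 ≤ p ≤ n−1 be an integer. Fix 0 < ε < π/6 and set δ = π/2 + ε/2 and b = λp/(δ − ε). Define u on the ball B_δ = {|x| < δ} ⊆ ℝⁿ by u(x) = cos(ε/2) if |x| ≤ π/2 − ε/2 and u(x) = sin|x| if π/2 − ε/2 ≤ |x| ≤ δ. Then u is continuous, is a viscosity subsolution of P⁺_{λ,Λ|p}(D²u) + b|Du| = 0 in B_δ, and max over the closed ball of u equals 1, which is strictly greater than cos(ε/2), the maximum of u on the boundary sphere {|x| = δ}; moreover bδ > λp. -/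
open MeasureTheory Metric Filter
open scoped ENNReal

noncomputable section

/-!
Off the plateau `‖x‖ ≤ π/2 - ε/2`, a test function `φ` touching `u` from above at `x₀` also
touches `sin ‖x‖` from above there. Differentiating along the radial line gives
`|Dφ(x₀)| ≥ |cos ‖x₀‖|`; differentiating twice along lines orthogonal to `x₀` gives
`D²φ(x₀) ≥ cos ‖x₀‖ / ‖x₀‖` on a hyperplane, so every eigenvalue but the smallest is at least
`cos ‖x₀‖ / ‖x₀‖`. As `p ≤ n - 1`, the `p` largest eigenvalues cost at most
`λ p |cos ‖x₀‖| / ‖x₀‖ ≤ b |cos ‖x₀‖|`, because `b = λp / (π/2 - ε/2)` and `‖x₀‖ ≥ π/2 - ε/2`.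
On the plateau `φ` has a local minimum, so its Hessian is positive semidefinite.
-/

open Matrix Topology Real Finset
open scoped InnerProductSpace

/- If `L < 0`, the second derivative test makes `a` a local maximum as well, so `f` is locally
constant and its second derivative vanishes. -/
theorem IsLocalMin.nonneg_of_hasDerivAt_deriv {f f' : ℝ → ℝ} {a L : ℝ} (hmin : IsLocalMin f a)
    (hf : ∀ᶠ t in 𝓝 a, HasDerivAt f (f' t) t) (hf' : HasDerivAt f' L a) : 0 ≤ L := by
  have hL : deriv (deriv f) a = L :=
    (hf'.congr_of_eventuallyEq (hf.mono fun t ht => ht.deriv)).deriv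
  by_contra! hneg
  have hmax : IsLocalMax f a :=
    isLocalMax_of_deriv_deriv_neg (hL ▸ hneg) hmin.deriv_eq_zero hf.self_of_nhds.continuousAt
  have hconst : deriv f =ᶠ[𝓝 a] fun _ => 0 := by
    have : f =ᶠ[𝓝 a] fun _ => f a := (hmin.and hmax).mono fun t ht => le_antisymm ht.2 ht.1
    filter_upwards [this.eventuallyEq_nhds] with t ht
    simp [ht.deriv_eq]
  rw [← hL, hconst.deriv_eq, deriv_const] at hneg
  exact hneg.false

theorem hasDerivAt_sqrt_sq_add_mul_sq {r : ℝ} (hr : r ≠ 0) (s t : ℝ) :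
    HasDerivAt (fun t => √(r ^ 2 + t ^ 2 * s ^ 2)) (t * s ^ 2 / √(r ^ 2 + t ^ 2 * s ^ 2)) t := by
  have hpos : r ^ 2 + t ^ 2 * s ^ 2 ≠ 0 := by positivity
  convert (((hasDerivAt_pow 2 t).mul_const (s ^ 2)).const_add (r ^ 2)).sqrt hpos using 1
  ring

/- The derivative is written as `t * k t`, so that its own derivative at `0` is simply `k 0`. -/
theorem hasDerivAt_sin_sqrt_sq_add_mul_sq {r : ℝ} (hr : r ≠ 0) (s t : ℝ) :
    HasDerivAt (fun t => sin √(r ^ 2 + t ^ 2 * s ^ 2))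
      (t * (cos √(r ^ 2 + t ^ 2 * s ^ 2) * s ^ 2 / √(r ^ 2 + t ^ 2 * s ^ 2))) t := by
  convert (hasDerivAt_sqrt_sq_add_mul_sq hr s t).sin using 1
  ring

theorem hasDerivAt_deriv_sin_sqrt_sq_add_mul_sq {r : ℝ} (hr : 0 < r) (s : ℝ) :
    HasDerivAt (fun t => t * (cos √(r ^ 2 + t ^ 2 * s ^ 2) * s ^ 2 / √(r ^ 2 + t ^ 2 * s ^ 2)))
      (cos r / r * s ^ 2) 0 := by
  have hsqrt := hasDerivAt_sqrt_sq_add_mul_sq hr.ne' s 0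
  have hk : DifferentiableAt ℝ
      (fun t => cos √(r ^ 2 + t ^ 2 * s ^ 2) * s ^ 2 / √(r ^ 2 + t ^ 2 * s ^ 2)) 0 :=
    ((hsqrt.cos.mul_const _).div hsqrt (by positivity)).differentiableAt
  refine ((hasDerivAt_id' (0 : ℝ)).fun_mul hk.hasDerivAt).congr_deriv ?_
  simp [Real.sqrt_sq hr.le, div_mul_eq_mul_div]

section AlongLines

variable {E : Type*} [NormedAddCommGroup E] [NormedSpace ℝ E] {φ : E → ℝ} {x : E}

theorem hasDerivAt_add_smul (x v : E) (t : ℝ) : HasDerivAt (fun t : ℝ => x + t • v) v t := by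
  simpa using ((hasDerivAt_id t).smul_const v).const_add x

theorem DifferentiableAt.hasDerivAt_comp_add_smul {v : E} {t : ℝ}
    (hφ : DifferentiableAt ℝ φ (x + t • v)) :
    HasDerivAt (fun t : ℝ => φ (x + t • v)) (fderiv ℝ φ (x + t • v) v) t :=
  hφ.hasFDerivAt.comp_hasDerivAt t (hasDerivAt_add_smul x v t)

theorem ContDiff.hasDerivAt_fderiv_comp_add_smul (hφ : ContDiff ℝ 2 φ) (x v : E) (t : ℝ) :
    HasDerivAt (fun t : ℝ => fderiv ℝ φ (x + t • v) v)
      (fderiv ℝ (fderiv ℝ φ) (x + t • v) v v) t := by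
  have hD : HasFDerivAt (fderiv ℝ φ) (fderiv ℝ (fderiv ℝ φ) (x + t • v)) (x + t • v) :=
    ((hφ.fderiv_right (m := 1) (by norm_num)).differentiable (by norm_num) _).hasFDerivAt
  exact (ContinuousLinearMap.apply ℝ ℝ v).hasFDerivAt.comp_hasDerivAt t
    (hD.comp_hasDerivAt t (hasDerivAt_add_smul x v t))

theorem IsLocalMin.comp_add_smul {f : E → ℝ} (h : IsLocalMin f x) (v : E) :
    IsLocalMin (fun t : ℝ => f (x + t • v)) 0 :=
  (show IsLocalMin f (x + (0 : ℝ) • v) by simpa using h).comp_continuous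
    (g := fun t : ℝ => x + t • v) (by fun_prop)

theorem ContDiff.le_fderiv_fderiv_of_isLocalMin_sub (hφ : ContDiff ℝ 2 φ) {v : E}
    {g g' : ℝ → ℝ} {L : ℝ} (hg : ∀ t, HasDerivAt g (g' t) t) (hg' : HasDerivAt g' L 0)
    (hmin : IsLocalMin (fun t => φ (x + t • v) - g t) 0) :
    L ≤ fderiv ℝ (fderiv ℝ φ) x v v := by
  have := hmin.nonneg_of_hasDerivAt_deriv
    (.of_forall fun t =>
      ((hφ.differentiable (by norm_num) _).hasDerivAt_comp_add_smul).sub (hg t))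
    ((hφ.hasDerivAt_fderiv_comp_add_smul x v 0).sub hg')
  simpa using this

theorem ContDiff.fderiv_fderiv_nonneg_of_isLocalMin (hφ : ContDiff ℝ 2 φ)
    (hmin : IsLocalMin φ x) (v : E) : 0 ≤ fderiv ℝ (fderiv ℝ φ) x v v :=
  hφ.le_fderiv_fderiv_of_isLocalMin_sub (g := 0) (g' := 0) (fun _ => hasDerivAt_const _ _)
    (hasDerivAt_const _ _) (by simpa using hmin.comp_add_smul v)

end AlongLines

section TouchingSinNorm

variable {E : Type*} [NormedAddCommGroup E] [InnerProductSpace ℝ E] {φ : E → ℝ} {x : E}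

theorem norm_add_smul_of_inner_eq_zero {v : E} (hv : ⟪x, v⟫_ℝ = 0) (t : ℝ) :
    ‖x + t • v‖ = √(‖x‖ ^ 2 + t ^ 2 * ‖v‖ ^ 2) := by
  rw [← Real.sqrt_sq (norm_nonneg (x + t • v)), norm_add_sq_real, real_inner_smul_right, hv,
    norm_smul, mul_pow, Real.norm_eq_abs, sq_abs]
  ring_nf

theorem norm_add_smul_inv_norm_smul {t : ℝ} (hx : x ≠ 0) (ht : -‖x‖ < t) :
    ‖x + t • (‖x‖⁻¹ • x)‖ = ‖x‖ + t := by
  have hr : 0 < ‖x‖ := norm_pos_iff.2 hx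
  have hpos : 0 < 1 + t * ‖x‖⁻¹ := by
    have : -1 < t * ‖x‖⁻¹ := by rw [← div_eq_mul_inv, lt_div_iff₀ hr]; linarith
    linarith
  rw [smul_smul, show x + (t * ‖x‖⁻¹) • x = (1 + t * ‖x‖⁻¹) • x by rw [add_smul, one_smul],
    norm_smul, Real.norm_eq_abs, abs_of_pos hpos]
  field_simp

theorem abs_cos_norm_le_norm_gradient [CompleteSpace E] (hφ : DifferentiableAt ℝ φ x)
    (hx : x ≠ 0) (hmin : IsLocalMin (fun y => φ y - sin ‖y‖) x) :
    |cos ‖x‖| ≤ ‖gradient φ x‖ := by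
  set e := ‖x‖⁻¹ • x
  have he : ‖e‖ = 1 := norm_smul_inv_norm hx
  have hradial : IsLocalMin (fun t : ℝ => φ (x + t • e) - sin (‖x‖ + t)) 0 := by
    refine (hmin.comp_add_smul e).congr ?_
    filter_upwards [Ioi_mem_nhds (neg_lt_zero.2 (norm_pos_iff.2 hx))] with t ht
    rw [norm_add_smul_inv_norm_smul hx ht]
  have hcos : fderiv ℝ φ x e = cos ‖x‖ := by
    have hline := (show DifferentiableAt ℝ φ (x + (0 : ℝ) • e) by simpa using hφ)
      |>.hasDerivAt_comp_add_smul
    have := hradial.hasDerivAt_eq_zero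
      (hline.sub (by simpa using ((hasDerivAt_id' (0 : ℝ)).const_add ‖x‖).sin))
    simp only [zero_smul, add_zero] at this
    linarith
  calc |cos ‖x‖| = |⟪gradient φ x, e⟫_ℝ| := by
        rw [gradient, InnerProductSpace.toDual_symm_apply, hcos]
    _ ≤ ‖gradient φ x‖ := by
        simpa [he] using abs_real_inner_le_norm (gradient φ x) e

theorem ContDiff.cos_norm_div_norm_mul_le_fderiv_fderiv (hφ : ContDiff ℝ 2 φ) (hx : x ≠ 0)
    (hmin : IsLocalMin (fun y => φ y - Real.sin ‖y‖) x) {v : E} (hv : ⟪x, v⟫_ℝ = 0) :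
    Real.cos ‖x‖ / ‖x‖ * ‖v‖ ^ 2 ≤ fderiv ℝ (fderiv ℝ φ) x v v := by
  have hr : 0 < ‖x‖ := norm_pos_iff.2 hx
  refine hφ.le_fderiv_fderiv_of_isLocalMin_sub (hasDerivAt_sin_sqrt_sq_add_mul_sq hr.ne' ‖v‖)
    (hasDerivAt_deriv_sin_sqrt_sq_add_mul_sq hr ‖v‖) ?_
  simpa only [norm_add_smul_of_inner_eq_zero hv] using hmin.comp_add_smul v

end TouchingSinNorm

theorem hessianMatrix_apply {n : ℕ} (φ : EuclideanSpace ℝ (Fin n) → ℝ)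
    (x : EuclideanSpace ℝ (Fin n)) (i j : Fin n) :
    hessianMatrix φ x i j
      = fderiv ℝ (fderiv ℝ φ) x (EuclideanSpace.single i 1) (EuclideanSpace.single j 1) := by
  simp [hessianMatrix, iteratedFDeriv_two_apply]

theorem dotProduct_hessianMatrix_mulVec {n : ℕ} (φ : EuclideanSpace ℝ (Fin n) → ℝ)
    (x v : EuclideanSpace ℝ (Fin n)) :
    v.ofLp ⬝ᵥ (hessianMatrix φ x *ᵥ v.ofLp) = fderiv ℝ (fderiv ℝ φ) x v v := by
  conv_rhs => rw [← (EuclideanSpace.basisFun (Fin n) ℝ).toBasis.sum_repr v]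
  simp only [map_sum, map_smul, FunLike.coe_sum, FunLike.coe_smul, Finset.sum_apply,
    Pi.smul_apply, OrthonormalBasis.coe_toBasis, OrthonormalBasis.coe_toBasis_repr_apply,
    EuclideanSpace.basisFun_repr, EuclideanSpace.basisFun_apply, smul_eq_mul, dotProduct, mulVec,
    hessianMatrix_apply, Finset.mul_sum]
  rw [Finset.sum_comm]
  exact Finset.sum_congr rfl fun _ _ => Finset.sum_congr rfl fun _ _ => by ring

theorem hessianMatrix_isHermitian {n : ℕ} {φ : EuclideanSpace ℝ (Fin n) → ℝ}
    (hφ : ContDiff ℝ 2 φ) (x : EuclideanSpace ℝ (Fin n)) : (hessianMatrix φ x).IsHermitian := by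
  ext i j
  simp only [conjTranspose_apply, star_trivial, hessianMatrix_apply]
  exact hφ.contDiffAt.isSymmSndFDerivAt (by simp) _ _

/- Otherwise a nonzero vector orthogonal to `w` in the span of two eigenvectors violates `h`. -/
theorem Matrix.IsHermitian.le_eigenvalues_or_of_le_on_orthogonal {ι : Type*} [Fintype ι]
    [DecidableEq ι] {X : Matrix ι ι ℝ} (hX : X.IsHermitian) {w : EuclideanSpace ℝ ι} {m : ℝ}
    (h : ∀ v : EuclideanSpace ℝ ι, ⟪w, v⟫_ℝ = 0 → m * ‖v‖ ^ 2 ≤ v.ofLp ⬝ᵥ (X *ᵥ v.ofLp))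
    {i j : ι} (hij : i ≠ j) : m ≤ hX.eigenvalues i ∨ m ≤ hX.eigenvalues j := by
  by_contra! hlt
  set b := hX.eigenvectorBasis
  have hXb : ∀ k, X *ᵥ (b k).ofLp = hX.eigenvalues k • (b k).ofLp := hX.mulVec_eigenvectorBasis
  have hdot : ∀ k l, (b k).ofLp ⬝ᵥ (b l).ofLp = if l = k then 1 else 0 := fun k l => by
    simpa using
      (EuclideanSpace.inner_eq_star_dotProduct (b l) (b k)).symm.trans (b.inner_eq_ite l k)
  obtain ⟨c, d, hcd, hperp⟩ : ∃ c d : ℝ, (c ≠ 0 ∨ d ≠ 0) ∧ ⟪w, c • b i + d • b j⟫_ℝ = 0 := by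
    by_cases h0 : ⟪w, b i⟫_ℝ = 0 ∧ ⟪w, b j⟫_ℝ = 0
    · exact ⟨1, 0, by simp, by simp [h0.1]⟩
    · refine ⟨⟪w, b j⟫_ℝ, -⟪w, b i⟫_ℝ, by rw [neg_ne_zero]; tauto, ?_⟩
      simp only [inner_add_right, real_inner_smul_right]
      ring
  have hnorm : ‖c • b i + d • b j‖ ^ 2 = c ^ 2 + d ^ 2 := by
    rw [norm_add_sq_real, norm_smul, norm_smul, real_inner_smul_left, real_inner_smul_right,
      b.inner_eq_zero hij]
    simp
  have hquad : (c • b i + d • b j).ofLp ⬝ᵥ (X *ᵥ (c • b i + d • b j).ofLp)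
      = c ^ 2 * hX.eigenvalues i + d ^ 2 * hX.eigenvalues j := by
    simp [mulVec_add, mulVec_smul, hXb, add_dotProduct, dotProduct_add, hdot, hij, hij.symm]
    ring
  have := h _ hperp
  rw [hnorm, hquad] at this
  rcases hcd with hc | hd
  · nlinarith [sq_pos_of_ne_zero hc, sq_nonneg d]
  · nlinarith [sq_pos_of_ne_zero hd, sq_nonneg c]

theorem le_sortedEig_of_le_or_le {n : ℕ} {X : Matrix (Fin n) (Fin n) ℝ} (hX : X.IsHermitian)
    {m : ℝ} (h : ∀ i j, i ≠ j → m ≤ hX.eigenvalues i ∨ m ≤ hX.eigenvalues j)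
    {k : Fin n} (hk : 0 < (k : ℕ)) : m ≤ sortedEig X k := by
  set σ := Tuple.sort hX.eigenvalues
  have hne : σ ⟨0, k.pos⟩ ≠ σ k := fun heq => hk.ne (congrArg Fin.val (σ.injective heq))
  have hmono : hX.eigenvalues (σ ⟨0, k.pos⟩) ≤ hX.eigenvalues (σ k) :=
    Tuple.monotone_sort hX.eigenvalues (Fin.mk_le_mk.2 (Nat.zero_le _))
  rw [sortedEig, dif_pos hX, Function.comp_apply]
  rcases h _ _ hne with h0 | hk'
  · exact h0.trans hmono
  · exact hk'

theorem Fin.card_filter_sub_le_val {n p : ℕ} (hp : p ≤ n) :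
    #{i : Fin n | n - p ≤ (i : ℕ)} = p := by
  have := card_filter_add_card_filter_not (s := univ) (fun i : Fin n => (i : ℕ) < n - p)
  simp only [not_lt, Fin.card_filter_val_lt, card_univ, Fintype.card_fin] at this
  omega

theorem mul_le_pucciSupP {n p : ℕ} {lam Lam m : ℝ} {X : Matrix (Fin n) (Fin n) ℝ}
    (hlam : 0 ≤ lam) (hLam : 0 ≤ Lam) (hm : m ≤ 0) (hp : p ≤ n)
    (h : ∀ i : Fin n, n - p ≤ (i : ℕ) → m ≤ sortedEig X i) :
    lam * p * m ≤ pucciSupP lam Lam p X := by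
  calc lam * p * m = ∑ i ∈ univ.filter (fun i : Fin n => n - p ≤ (i : ℕ)), lam * m := by
        rw [sum_const, Fin.card_filter_sub_le_val hp, nsmul_eq_mul]; ring
    _ ≤ pucciSupP lam Lam p X := by
        refine sum_le_sum fun i hi => ?_
        have hneg : max (-sortedEig X i) 0 ≤ -m :=
          max_le (by linarith [h i (mem_filter.1 hi).2]) (by linarith)
        nlinarith [mul_nonneg hLam (le_max_right (sortedEig X i) 0),
          mul_le_mul_of_nonneg_left hneg hlam]

theorem lam_mul_min_le_pucciSupP_of_le_on_orthogonal {n p : ℕ} {lam Lam m : ℝ}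
    {X : Matrix (Fin n) (Fin n) ℝ} (hX : X.IsHermitian) {w : EuclideanSpace ℝ (Fin n)}
    (hlam : 0 ≤ lam) (hLam : lam ≤ Lam) (hpn : p ≤ n - 1)
    (h : ∀ v : EuclideanSpace ℝ (Fin n), ⟪w, v⟫_ℝ = 0 → m * ‖v‖ ^ 2 ≤ v.ofLp ⬝ᵥ (X *ᵥ v.ofLp)) :
    lam * p * min m 0 ≤ pucciSupP lam Lam p X := by
  have h' : ∀ v : EuclideanSpace ℝ (Fin n), ⟪w, v⟫_ℝ = 0 →
      min m 0 * ‖v‖ ^ 2 ≤ v.ofLp ⬝ᵥ (X *ᵥ v.ofLp) := fun v hv =>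
    (mul_le_mul_of_nonneg_right (min_le_left m 0) (sq_nonneg _)).trans (h v hv)
  refine mul_le_pucciSupP hlam (hlam.trans hLam) (min_le_right m 0) (by omega) fun i hi => ?_
  exact le_sortedEig_of_le_or_le hX
    (fun _ _ => hX.le_eigenvalues_or_of_le_on_orthogonal h') (by omega)

def sinPlateau {E : Type*} [Norm E] (c : ℝ) (x : E) : ℝ :=
  if ‖x‖ ≤ c then sin c else sin ‖x‖

section SinPlateau

variable {E : Type*} [SeminormedAddCommGroup E] {c : ℝ}

theorem sinPlateau_of_le {x : E} (hx : c ≤ ‖x‖) : sinPlateau c x = sin ‖x‖ := by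
  rcases hx.lt_or_eq with hlt | heq
  · simp [sinPlateau, not_le.2 hlt]
  · simp [sinPlateau, heq]

theorem continuous_sinPlateau (c : ℝ) : Continuous (sinPlateau c : E → ℝ) :=
  continuous_const.if_le (continuous_sin.comp continuous_norm) continuous_norm continuous_const
    fun x hx => by rw [hx]

theorem sin_norm_le_sinPlateau (hc : c ≤ π / 2) (x : E) : sin ‖x‖ ≤ sinPlateau c x := by
  unfold sinPlateau
  split_ifs with hx
  · exact sin_le_sin_of_le_of_le_pi_div_two (by linarith [norm_nonneg x, pi_pos]) hc hx
  · exact le_rfl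

theorem sinPlateau_le_one (x : E) : sinPlateau c x ≤ 1 := by
  unfold sinPlateau
  split_ifs <;> exact sin_le_one _

end SinPlateau

theorem isViscositySubsolution_sinPlateau {n p : ℕ} {lam Lam b c : ℝ}
    {Ω : Set (EuclideanSpace ℝ (Fin n))} (hΩ : IsOpen Ω) (hlam : 0 ≤ lam) (hLam : lam ≤ Lam)
    (hpn : p ≤ n - 1) (hc : 0 < c) (hcπ : c ≤ π / 2) (hb : 0 ≤ b) (hbc : lam * p ≤ b * c) :
    IsViscositySubsolution Ω (fun _ ξ X => pucciSupP lam Lam p X + b * ‖ξ‖) (sinPlateau c)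
      (fun _ => 0) := by
  intro x₀ hx₀ φ hφ hmax
  replace hmax : IsLocalMax (fun x => sinPlateau c x - φ x) x₀ :=
    hmax.isLocalMax (hΩ.mem_nhds hx₀)
  have hX := hessianMatrix_isHermitian hφ x₀
  show 0 ≤ pucciSupP lam Lam p (hessianMatrix φ x₀) + b * ‖gradient φ x₀‖
  rcases lt_or_ge ‖x₀‖ c with hr | hr
  · have hmin : IsLocalMin φ x₀ := by
      filter_upwards [hmax, continuous_norm.continuousAt.eventually_lt continuousAt_const hr]
        with x hx hxc
      simp only [sinPlateau, if_pos hxc.le, if_pos hr.le] at hx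
      linarith
    have hpucci := lam_mul_min_le_pucciSupP_of_le_on_orthogonal hX (w := x₀) (m := 0) hlam hLam
      hpn fun v _ => by
        rw [zero_mul, dotProduct_hessianMatrix_mulVec]
        exact hφ.fderiv_fderiv_nonneg_of_isLocalMin hmin v
    simp only [min_self, mul_zero] at hpucci
    linarith [mul_nonneg hb (norm_nonneg (gradient φ x₀))]
  · have hx₀ : x₀ ≠ 0 := norm_pos_iff.1 (hc.trans_le hr)
    have hmin : IsLocalMin (fun x => φ x - sin ‖x‖) x₀ := by
      filter_upwards [hmax] with x hx
      rw [sinPlateau_of_le hr] at hx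
      linarith [sin_norm_le_sinPlateau hcπ x]
    have hpucci := lam_mul_min_le_pucciSupP_of_le_on_orthogonal hX hlam hLam hpn
      fun v hv => by
        rw [dotProduct_hessianMatrix_mulVec]
        exact hφ.cos_norm_div_norm_mul_le_fderiv_fderiv hx₀ hmin hv
    have hgrad := abs_cos_norm_le_norm_gradient (hφ.differentiable (by norm_num) x₀) hx₀ hmin
    have hmin_ge : -(|cos ‖x₀‖| / c) ≤ min (cos ‖x₀‖ / ‖x₀‖) 0 := by
      refine le_min ?_ (neg_nonpos.2 (by positivity))
      calc -(|cos ‖x₀‖| / c) ≤ -(|cos ‖x₀‖| / ‖x₀‖) := by gcongr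
        _ = -|cos ‖x₀‖| / ‖x₀‖ := by ring
        _ ≤ cos ‖x₀‖ / ‖x₀‖ := by gcongr; exact neg_abs_le _
    have hcoef : lam * p / c ≤ b := (div_le_iff₀ hc).2 hbc
    have hdrift : -(b * |cos ‖x₀‖|) ≤ lam * p * min (cos ‖x₀‖ / ‖x₀‖) 0 :=
      calc -(b * |cos ‖x₀‖|) ≤ -(lam * p / c * |cos ‖x₀‖|) := by gcongr
        _ = lam * p * -(|cos ‖x₀‖| / c) := by ring
        _ ≤ _ := by gcongr
    linarith [mul_le_mul_of_nonneg_left hgrad hb]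

theorem maximum_principle_counterexample_general (n : ℕ) (lam Lam : ℝ)
    (hlam : 0 < lam) (hLam : lam ≤ Lam) (p : ℕ) (hp1 : 1 ≤ p) (hpn : p ≤ n - 1)
    (ε : ℝ) (hε0 : 0 < ε) (hε : ε < Real.pi / 6)
    (δ b : ℝ) (hδ : δ = Real.pi / 2 + ε / 2) (hb : b = lam * p / (δ - ε))
    (u : EuclideanSpace ℝ (Fin n) → ℝ)
    (hudef : ∀ x : EuclideanSpace ℝ (Fin n),
      u x = if ‖x‖ ≤ Real.pi / 2 - ε / 2 then Real.cos (ε / 2) else Real.sin ‖x‖) :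
    Continuous u ∧
    IsViscositySubsolution (ball (0 : EuclideanSpace ℝ (Fin n)) δ)
      (fun _ ξ X => pucciSupP lam Lam p X + b * ‖ξ‖) u (fun _ => 0) ∧
    (∀ x ∈ closedBall (0 : EuclideanSpace ℝ (Fin n)) δ, u x ≤ 1) ∧
    (∃ x ∈ closedBall (0 : EuclideanSpace ℝ (Fin n)) δ, u x = 1) ∧
    (∀ x ∈ sphere (0 : EuclideanSpace ℝ (Fin n)) δ, u x = Real.cos (ε / 2)) ∧
    Real.cos (ε / 2) < 1 ∧
    lam * p < b * δ := by
  set c := π / 2 - ε / 2 with hcdef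
  have hc : 0 < c := by linarith [pi_gt_three]
  have hu : u = sinPlateau c := funext fun x => by rw [hudef, sinPlateau, sin_pi_div_two_sub]
  have hδc : δ - ε = c := by rw [hδ]; ring
  have hbc : b * c = lam * p := by rw [hb, hδc, div_mul_cancel₀ _ hc.ne']
  have hbpos : 0 < b := by rw [hb, hδc]; exact div_pos (mul_pos hlam (by exact_mod_cast hp1)) hc
  have hpeak : ‖EuclideanSpace.single (⟨0, by omega⟩ : Fin n) (π / 2)‖ = π / 2 := by
    simp [abs_of_pos pi_pos]
  subst hu
  refine ⟨continuous_sinPlateau c, isViscositySubsolution_sinPlateau isOpen_ball hlam.le hLam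
    hpn hc (by linarith) hbpos.le hbc.ge, fun x _ => sinPlateau_le_one x,
    ⟨_, by rw [mem_closedBall_zero_iff, hpeak, hδ]; linarith, ?_⟩, fun x hx => ?_, ?_, ?_⟩
  · rw [sinPlateau_of_le (by rw [hpeak]; linarith), hpeak, sin_pi_div_two]
  · rw [mem_sphere_zero_iff_norm] at hx
    rw [sinPlateau_of_le (by rw [hx]; linarith), hx, hδ, ← sin_pi_div_two_sub, ← sin_pi_sub]
    ring_nf
  · simpa using cos_lt_cos_of_nonneg_of_le_pi le_rfl (by linarith [pi_pos]) (half_pos hε0)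
  · nlinarith

/-- failure of the Maximum Principle when `bδ > λp`. -/
theorem maximum_principle_counterexample (n : ℕ) (hn : 2 ≤ n) (lam Lam : ℝ)
    (hlam : 0 < lam) (hLam : lam ≤ Lam) (p : ℕ) (hp1 : 1 ≤ p) (hpn : p ≤ n - 1)
    (ε : ℝ) (hε0 : 0 < ε) (hε : ε < Real.pi / 6)
    (δ b : ℝ) (hδ : δ = Real.pi / 2 + ε / 2) (hb : b = lam * p / (δ - ε))
    (u : EuclideanSpace ℝ (Fin n) → ℝ)
    (hudef : ∀ x : EuclideanSpace ℝ (Fin n),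
      u x = if ‖x‖ ≤ Real.pi / 2 - ε / 2 then Real.cos (ε / 2) else Real.sin ‖x‖) :
    Continuous u ∧
    IsViscositySubsolution (ball (0 : EuclideanSpace ℝ (Fin n)) δ)
      (fun _ ξ X => pucciSupP lam Lam p X + b * ‖ξ‖) u (fun _ => 0) ∧
    (∀ x ∈ closedBall (0 : EuclideanSpace ℝ (Fin n)) δ, u x ≤ 1) ∧
    (∃ x ∈ closedBall (0 : EuclideanSpace ℝ (Fin n)) δ, u x = 1) ∧
    (∀ x ∈ sphere (0 : EuclideanSpace ℝ (Fin n)) δ, u x = Real.cos (ε / 2)) ∧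
    Real.cos (ε / 2) < 1 ∧
    lam * p < b * δ :=
  maximum_principle_counterexample_general n lam Lam hlam hLam p hp1 hpn ε hε0 hε δ b hδ hb u hudef

end
end
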